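/- arXiv:1505.04220 — 2 statements merged into one kernel-verified Lean document; each statement's English description precedes it below -/
import Mathlib

section
/- In the user-proposing deferred acceptance process, the sequence of tentative partners held by any fixed RB is monotonically improving: if RB n holds user m at some iteration and user m' at a later iteration, then n weakly prefers m' to m. -/
/-- Monotone improvement in user-proposing deferred acceptance: `hold t n` is the
tentative partner held by RB `n` at iteration `t` and `props t n` the set of users
proposing to `n` at iteration `t`.  At each round each RB keeps the best option
(w.r.t. its strict preference `prefN n`) among its currently held user and the new
proposers.  Then if RB `n` holds `m` at some iteration and `m'` at a later iteration,
`n` weakly prefers `m'` to `m`. -/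
theorem da_holds_monotone
    (M N : Type*)
    (prefN : N → Option M → Option M → Prop)
    (hN : ∀ n, IsStrictTotalOrder (Option M) (prefN n))
    (hold : ℕ → N → Option M)
    (props : ℕ → N → Set M)
    (hstep : ∀ t n,
      hold (t + 1) n ∈ insert (hold t n) (Option.some '' props t n) ∧
      ∀ o ∈ insert (hold t n) (Option.some '' props t n),
        o = hold (t + 1) n ∨ prefN n (hold (t + 1) n) o) :
    ∀ t t' (n : N) (m m' : M), t ≤ t' →
      hold t n = some m → hold t' n = some m' →
      m' = m ∨ prefN n (some m') (some m) := by
  have key : ∀ t n, ∀ s, hold (t + s) n = hold t n ∨ prefN n (hold (t + s) n) (hold t n) := by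
    intro t n s
    induction s with
    | zero => exact Or.inl rfl
    | succ s ih =>
      have hone := (hstep (t + s) n).2 (hold (t + s) n) (Set.mem_insert _ _)
      have := (hN n).trans
      rcases ih with h | h
      · rcases hone with h1 | h1
        · exact Or.inl (h1 ▸ h)
        · exact Or.inr (h ▸ h1)
      · rcases hone with h1 | h1
        · exact Or.inr (h1 ▸ h)
        · exact Or.inr ((hN n).trans _ _ _ h1 h)
  intro t t' n m m' htt h1 h2
  obtain ⟨s, rfl⟩ := Nat.exists_eq_add_of_le htt
  rcases key t n s with h | h
  · left; rw [h, h1] at h2; exact (Option.some_injective _ h2.symm)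
  · right; rwa [h1, h2] at h
end

section
/- In the user-proposing deferred acceptance process, once a user m is rejected by an RB n, then at every subsequent iteration RB n holds some user that n strictly prefers to m; hence m can never be matched to n at termination. -/
/-- Rejection is final in user-proposing deferred acceptance: with the dynamics where
each RB keeps the best option among its held user and proposers (strict preferences,
and every RB prefers any user to being unmatched), once user `m` is rejected by RB `n`
at iteration `t` (i.e. `m` proposed to `n` but is not held at `t+1`), at every later
iteration `n` holds some user it strictly prefers to `m`; hence `m` is never matched
to `n` afterwards. -/
theorem da_rejection_final
    (M N : Type*)
    (prefN : N → Option M → Option M → Prop)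
    (hN : ∀ n, IsStrictTotalOrder (Option M) (prefN n))
    (hacc : ∀ (n : N) (m : M), prefN n (some m) none)
    (hold : ℕ → N → Option M)
    (props : ℕ → N → Set M)
    (hstep : ∀ t n,
      hold (t + 1) n ∈ insert (hold t n) (Option.some '' props t n) ∧
      ∀ o ∈ insert (hold t n) (Option.some '' props t n),
        o = hold (t + 1) n ∨ prefN n (hold (t + 1) n) o)
    (t : ℕ) (n : N) (m : M)
    (hreject : m ∈ props t n ∧ hold (t + 1) n ≠ some m) :
    ∀ t' > t, (∃ m'' : M, hold t' n = some m'' ∧ prefN n (some m'') (some m)) ∧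
      hold t' n ≠ some m := by
  have trans := (hN n).trans
  have irrefl := (hN n).irrefl
  have asymm : ∀ a b, prefN n a b → ¬ prefN n b a := by
    intro a b h1 h2
    exact irrefl a (trans a b a h1 h2)
  -- key: for all t' > t, n holds some m'' strictly preferred to m
  have key : ∀ t' > t, ∃ m'' : M, hold t' n = some m'' ∧ prefN n (some m'') (some m) := by
    intro t' ht'
    induction t' with
    | zero => omega
    | succ s ih =>
      rcases Nat.lt_or_ge t s with hlt | hge
      · obtain ⟨m'', hm'', hpref⟩ := ih hlt
        obtain ⟨hmem, hbest⟩ := hstep s n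
        have := hbest (hold s n) (Set.mem_insert _ _)
        rw [hm''] at this
        have hpref' : prefN n (hold (s+1) n) (some m) := by
          rcases this with h | h
          · rw [h] at hpref; exact hpref
          · exact trans _ _ _ h hpref
        rcases hmem with h | ⟨x, _, hx⟩
        · rw [h, hm''] at hpref' ⊢; exact ⟨m'', rfl, hpref'⟩
        · exact ⟨x, hx.symm, by rw [hx]; exact hpref'⟩
      · -- s = t
        have hst : s = t := by omega
        subst hst
        obtain ⟨hmem, hbest⟩ := hstep s n
        have hmm : some m ∈ insert (hold s n) (Option.some '' props s n) :=
          Set.mem_insert_of_mem _ ⟨m, hreject.1, rfl⟩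
        have := hbest (some m) hmm
        have hpref' : prefN n (hold (s+1) n) (some m) := by
          rcases this with h | h
          · exact absurd h.symm hreject.2
          · exact h
        cases h : hold (s+1) n with
        | none =>
          rw [h] at hpref'
          exact absurd hpref' (asymm _ _ (hacc n m))
        | some x => exact ⟨x, rfl, by rw [h] at hpref'; exact hpref'⟩
  intro t' ht'
  obtain ⟨m'', hm'', hpref⟩ := key t' ht'
  refine ⟨⟨m'', hm'', hpref⟩, ?_⟩
  intro h
  rw [h] at hm''
  injection hm'' with hm''
  subst hm''
  exact irrefl _ hpref
end
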